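/- Let dim S_1 = 3 and let g ∈ S_3 be a nonzero ternary cubic form. Then there exist x, y ∈ S^1, nonzero and spanning distinct lines ⟨x⟩ ≠ ⟨y⟩, such that (xy)⌟g = 0; that is, g admits an apolar conic which is simply degenerate (a product of two distinct linear forms). -/

import Mathlib

open MvPolynomial

/-- The element of `S_1` (the space of linear ternary forms) with coefficient
vector `c` with respect to the fixed basis `X 0, X 1, X 2`. -/
noncomputable def lin {K : Type*} [Field K] (c : Fin 3 → K) : MvPolynomial (Fin 3) K :=
  ∑ j, C (c j) * X j

/-- Contraction `c ⌟ f` of `f ∈ S_•` by the element of `S^1 = (S_1)^*` with coordinates `c`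
in the dual basis: the constant-coefficient first-order differential operator determined
by `c`, extended multiplicatively by `(st) ⌟ f = s ⌟ (t ⌟ f)` (i.e. by composition). -/
noncomputable def contra {K : Type*} [Field K] (c : Fin 3 → K)
    (f : MvPolynomial (Fin 3) K) : MvPolynomial (Fin 3) K :=
  ∑ j, c j • pderiv j f

/-- The Waring rank of a ternary quartic: the least `r` such that `f` is a sum of `r`
fourth powers of elements of `S_1`. -/
noncomputable def wrank {K : Type*} [Field K] (f : MvPolynomial (Fin 3) K) : ℕ :=
  sInf {r : ℕ | ∃ c : Fin r → (Fin 3 → K), f = ∑ i, (lin (c i)) ^ 4}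

/-!
The conics apolar to a ternary cubic `g` form a space of symmetric `3 × 3` matrices of dimension
at least `6 - 3 = 3`, because `Q ↦ Q ⌟ g` takes values in the linear forms. Every pencil of
square matrices has a singular member, and a singular symmetric `3 × 3` matrix is a symmetric
product `x yᵀ + y xᵀ`. If the singular member is a double line `v vᵀ`, a second pencil
avoiding `v vᵀ` gives either a simply degenerate conic or a second double line `w wᵀ`, and then
`v vᵀ + w wᵀ = ½ ((v + ι w)(v - ι w)ᵀ + (v - ι w)(v + ι w)ᵀ)` with `ι² = -1`.
-/

section
open Matrix Module

variable {K : Type*} [Field K]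

def Matrix.symMul {n R : Type*} [Mul R] [Add R] (x y : n → R) : Matrix n n R :=
  vecMulVec x y + vecMulVec y x

theorem exists_linear_factors_of_binary_quadratic [IsAlgClosed K] (a b c : K) :
    ∃ α β γ δ : K, α * γ = a ∧ α * δ + β * γ = b ∧ β * δ = c := by
  rcases eq_or_ne a 0 with rfl | ha
  · exact ⟨0, 1, b, c, by ring, by ring, by ring⟩
  obtain ⟨r, hr⟩ := IsAlgClosed.exists_root (Polynomial.C a * .X ^ 2 + .C b * .X + .C c)
    (by rw [Polynomial.degree_quadratic ha]; decide)
  have hr : a * r ^ 2 + b * r + c = 0 := by simpa using hr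
  exact ⟨1, -r, a, a * r + b, by ring, by ring, by linear_combination -hr⟩

theorem Matrix.transpose_mul_symMul_mul {n R : Type*} [Fintype n] [CommRing R]
    (A : Matrix n n R) (x y : n → R) :
    Aᵀ * symMul x y * A = symMul (x ᵥ* A) (y ᵥ* A) := by
  simp only [symMul, Matrix.mul_add, Matrix.add_mul, mul_vecMulVec, vecMulVec_mul,
    mulVec_transpose]

theorem Matrix.exists_symMul_eq_of_row_eq_zero [IsAlgClosed K] [NeZero (2 : K)]
    {Q : Matrix (Fin 3) (Fin 3) K} (hQ : Qᵀ = Q) {i : Fin 3} (hi : ∀ j, Q i j = 0) :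
    ∃ x y : Fin 3 → K, symMul x y = Q := by
  have hi' (j : Fin 3) : Q j i = 0 := by rw [← hQ, transpose_apply, hi]
  have hne := (by decide : ∀ i : Fin 3, i + 1 ≠ i ∧ i + 2 ≠ i ∧ i + 2 ≠ i + 1) i
  have hcover := (by decide : ∀ i m : Fin 3, m = i ∨ m = i + 1 ∨ m = i + 2) i
  obtain ⟨α, β, γ, δ, h1, h2, h3⟩ := exists_linear_factors_of_binary_quadratic
    (2⁻¹ * Q (i + 1) (i + 1)) (Q (i + 1) (i + 2)) (2⁻¹ * Q (i + 2) (i + 2))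
  have h1' : α * γ + γ * α = Q (i + 1) (i + 1) := by
    rw [mul_comm γ, ← two_mul, h1, mul_inv_cancel_left₀ two_ne_zero]
  have h3' : β * δ + δ * β = Q (i + 2) (i + 2) := by
    rw [mul_comm δ, ← two_mul, h3, mul_inv_cancel_left₀ two_ne_zero]
  have h2' : β * γ + δ * α = Q (i + 2) (i + 1) := by
    rw [← hQ, transpose_apply, ← h2]; ring
  refine ⟨α • Pi.single (i + 1) 1 + β • Pi.single (i + 2) 1,
    γ • Pi.single (i + 1) 1 + δ • Pi.single (i + 2) 1, ?_⟩
  ext m l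
  rcases hcover m with rfl | rfl | rfl <;> rcases hcover l with rfl | rfl | rfl <;>
    simp [symMul, vecMulVec_apply, hi, hi', hne, hne.1.symm, hne.2.1.symm, hne.2.2.symm,
      ← h1', ← h2, ← h2', ← h3', mul_comm]

theorem Matrix.exists_symMul_eq_of_det_eq_zero [IsAlgClosed K] [NeZero (2 : K)]
    {Q : Matrix (Fin 3) (Fin 3) K} (hQ : Qᵀ = Q) (hdet : Q.det = 0) :
    ∃ x y : Fin 3 → K, symMul x y = Q := by
  obtain ⟨k, hk, hQk⟩ := exists_mulVec_eq_zero_iff.mpr hdet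
  obtain ⟨i, hi⟩ : ∃ i, k i ≠ 0 := Function.ne_iff.mp hk
  -- `E` projects along `k` onto `{z | z i = 0}`, so `Q = Eᵀ Q E = Eᵀ (D Q D) E` and the
  -- `i`-th row of `D Q D` vanishes.
  set E : Matrix (Fin 3) (Fin 3) K := 1 - (k i)⁻¹ • vecMulVec k (Pi.single i 1)
  set D : Matrix (Fin 3) (Fin 3) K := 1 - single i i 1
  have hQE : Q * E = Q := by
    simp [E, Matrix.mul_sub, mul_vecMulVec, hQk]
  have hErow (n : Fin 3) : E i n = 0 := by
    by_cases h : i = n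
    · subst h; simp [E, vecMulVec_apply, hi]
    · simp [E, vecMulVec_apply, h]
  have hDE : D * E = E := by
    ext m n
    by_cases hm : i = m
    · subst hm; simp [D, Matrix.sub_mul, hErow]
    · simp [D, Matrix.sub_mul, single_mul_apply_of_ne (h := Ne.symm hm)]
  have hD : Dᵀ = D := by simp [D]
  obtain ⟨x, y, hxy⟩ := exists_symMul_eq_of_row_eq_zero (Q := D * Q * D) (i := i)
    (by rw [transpose_mul, transpose_mul, hD, hQ, Matrix.mul_assoc])
    (fun j => by simp [D, Matrix.mul_apply, Matrix.sub_apply, single_apply, Matrix.one_apply])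
  refine ⟨x ᵥ* E, y ᵥ* E, ?_⟩
  calc symMul (x ᵥ* E) (y ᵥ* E) = (D * E)ᵀ * Q * (D * E) := by
        rw [← transpose_mul_symMul_mul, hxy, transpose_mul, hD]; simp only [Matrix.mul_assoc]
    _ = Q := by rw [hDE, Matrix.mul_assoc, hQE, ← hQ, ← transpose_mul, hQ, hQE, hQ]

theorem Matrix.exists_det_smul_add_smul_eq_zero [IsAlgClosed K] {n : Type*} [Fintype n]
    [DecidableEq n] [Nonempty n] (A B : Matrix n n K) :
    ∃ s t : K, (s, t) ≠ 0 ∧ (s • A + t • B).det = 0 := by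
  by_cases hB : B.det = 0
  · exact ⟨0, 1, by simp, by simpa using hB⟩
  obtain ⟨μ, hμ⟩ := IsAlgClosed.exists_root (B⁻¹ * A).charpoly
    (by rw [charpoly_degree_eq_dim]; exact_mod_cast Fintype.card_ne_zero)
  refine ⟨-1, μ, by simp, ?_⟩
  have : (-1 : K) • A + μ • B = B * (scalar n μ - B⁻¹ * A) := by
    rw [mul_sub, ← mul_assoc, mul_nonsing_inv _ (isUnit_iff_ne_zero.mpr hB), one_mul,
      scalar_apply, ← smul_one_eq_diagonal, Matrix.mul_smul, mul_one]
    module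
  rw [this, det_mul, ← eval_charpoly, hμ.eq_zero, mul_zero]

theorem Submodule.exists_ne_zero_det_eq_zero [IsAlgClosed K] {n : Type*} [Fintype n]
    [DecidableEq n] [Nonempty n] {P : Submodule K (Matrix n n K)} (hP : 2 ≤ finrank K P) :
    ∃ Q ∈ P, Q ≠ 0 ∧ Q.det = 0 := by
  obtain ⟨f, hf⟩ := exists_linearIndependent_of_le_finrank hP
  obtain ⟨s, t, hst, hdet⟩ := exists_det_smul_add_smul_eq_zero (f 0 : Matrix n n K) (f 1)
  refine ⟨s • f 0 + t • f 1, P.add_mem (P.smul_mem s (f 0).2) (P.smul_mem t (f 1).2), ?_, hdet⟩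
  intro h0
  have := Fintype.linearIndependent_iff.mp hf ![s, t] (by ext1; simpa [Fin.sum_univ_two] using h0)
  exact hst (Prod.ext (this 0) (this 1))

theorem Submodule.finrank_le_finrank_inf_ker_add_one {V : Type*} [AddCommGroup V] [Module K V]
    [FiniteDimensional K V] (W : Submodule K V) (f : V →ₗ[K] K) :
    finrank K W ≤ finrank K ↥(W ⊓ LinearMap.ker f) + 1 := by
  have h1 := Submodule.finrank_sup_add_finrank_inf_eq W (LinearMap.ker f)
  have h2 := Submodule.finrank_le (W ⊔ LinearMap.ker f)
  have h3 := LinearMap.finrank_range_add_finrank_ker f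
  have h4 := Submodule.finrank_le (LinearMap.range f)
  rw [finrank_self] at h4
  omega

theorem Matrix.exists_vecMulVec_self_eq_symMul [IsAlgClosed K] {n : Type*} {x y : n → K}
    (h : ¬LinearIndependent K ![x, y]) : ∃ v, vecMulVec v v = symMul x y := by
  rw [LinearIndependent.pair_iff] at h
  push Not at h
  obtain ⟨s, t, hst, hne⟩ := h
  rcases eq_or_ne t 0 with rfl | ht
  · have hs : s ≠ 0 := fun hs => hne hs rfl
    have hx : x = 0 := by simpa [hs] using hst
    exact ⟨0, by simp [symMul, hx]⟩
  have hy : y = (-(s / t)) • x := by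
    refine smul_right_injective _ ht ?_
    dsimp only
    rw [smul_smul, mul_neg, mul_div_cancel₀ _ ht, neg_smul, eq_neg_iff_add_eq_zero, add_comm, hst]
  obtain ⟨r, hr⟩ := IsAlgClosed.exists_eq_mul_self (2 * -(s / t))
  refine ⟨r • x, ?_⟩
  rw [hy, symMul, smul_vecMulVec, vecMulVec_smul, smul_vecMulVec, vecMulVec_smul, smul_smul, ← hr,
    mul_smul, two_smul]

theorem Matrix.exists_linearIndependent_symMul_eq_two_smul_add [IsAlgClosed K] [NeZero (2 : K)]
    {n : Type*} {v w : n → K} (h : LinearIndependent K ![v, w]) :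
    ∃ x y, LinearIndependent K ![x, y] ∧
      symMul x y = (2 : K) • (vecMulVec v v + vecMulVec w w) := by
  obtain ⟨ι, hι⟩ := IsAlgClosed.exists_eq_mul_self (-1 : K)
  have hι0 : ι ≠ 0 := by rintro rfl; simp at hι
  refine ⟨(1 : K) • v + ι • w, (1 : K) • v + (-ι) • w, ?_, ?_⟩
  · rw [LinearIndependent.pair_add_smul_add_smul_iff]
    refine ⟨h, fun h' => hι0 ?_⟩
    have : (2 : K) * ι = 0 := by linear_combination -h'
    exact (mul_eq_zero.mp this).resolve_left two_ne_zero
  · simp only [symMul, add_vecMulVec, vecMulVec_add, smul_vecMulVec, vecMulVec_smul]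
    linear_combination (norm := module) hι • (2 : K) • vecMulVec w w

theorem Submodule.exists_linearIndependent_symMul_mem [IsAlgClosed K] [NeZero (2 : K)]
    {V : Submodule K (Matrix (Fin 3) (Fin 3) K)} (hV : ∀ Q ∈ V, Qᵀ = Q)
    (h3 : 3 ≤ finrank K V) :
    ∃ x y : Fin 3 → K, LinearIndependent K ![x, y] ∧ symMul x y ∈ V := by
  have key (Q : Matrix (Fin 3) (Fin 3) K) (hQ : Q ∈ V) (hdet : Q.det = 0) :
      (∃ x y : Fin 3 → K, LinearIndependent K ![x, y] ∧ symMul x y ∈ V) ∨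
        ∃ v, vecMulVec v v = Q := by
    obtain ⟨x, y, rfl⟩ := exists_symMul_eq_of_det_eq_zero (hV _ hQ) hdet
    by_cases hxy : LinearIndependent K ![x, y]
    · exact .inl ⟨x, y, hxy, hQ⟩
    · exact .inr (exists_vecMulVec_self_eq_symMul hxy)
  obtain ⟨Q₁, hQ₁, hQ₁0, hdet₁⟩ := exists_ne_zero_det_eq_zero (P := V) (by omega)
  obtain h | ⟨v, rfl⟩ := key Q₁ hQ₁ hdet₁
  · exact h
  have hv : v ≠ 0 := by rintro rfl; simp at hQ₁0
  obtain ⟨i, hi⟩ : ∃ i, v i ≠ 0 := Function.ne_iff.mp hv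
  -- Requiring a vanishing `(i, i)` entry keeps the second singular member off the line of `v vᵀ`.
  obtain ⟨Q₂, ⟨hQ₂, hQ₂i⟩, hQ₂0, hdet₂⟩ :=
    exists_ne_zero_det_eq_zero (P := V ⊓ LinearMap.ker (entryLinearMap K K i i))
      (by have := V.finrank_le_finrank_inf_ker_add_one (entryLinearMap K K i i); omega)
  obtain h | ⟨w, rfl⟩ := key Q₂ hQ₂ hdet₂
  · exact h
  have hwi : w i = 0 := mul_self_eq_zero.mp (by simpa [vecMulVec_apply] using hQ₂i)
  have hvw : LinearIndependent K ![v, w] := by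
    rw [LinearIndependent.pair_iff]
    intro s t hst
    have hs : s = 0 := by simpa [hi, hwi] using congrFun hst i
    subst hs
    have hw : w ≠ 0 := fun hw => hQ₂0 (by simp [hw])
    simpa [hw] using hst
  obtain ⟨x, y, hxy, hsum⟩ := exists_linearIndependent_symMul_eq_two_smul_add hvw
  exact ⟨x, y, hxy, hsum ▸ V.smul_mem _ (V.add_mem hQ₁ hQ₂)⟩

theorem MvPolynomial.pderiv_pderiv_comm {R σ : Type*} [CommSemiring R] (i j : σ)
    (p : MvPolynomial σ R) : pderiv i (pderiv j p) = pderiv j (pderiv i p) := by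
  induction p using MvPolynomial.induction_on with
  | C a => simp
  | add p q hp hq => simp [hp, hq]
  | mul_X p n ih =>
    classical
    simp only [pderiv_mul, map_add, pderiv_X, Pi.single_apply]
    split_ifs <;> simp [ih, add_right_comm]

variable {σ : Type*} [Fintype σ]

noncomputable def MvPolynomial.contractMatrix (g : MvPolynomial σ K) :
    Matrix σ σ K →ₗ[K] MvPolynomial σ K where
  toFun Q := ∑ j, ∑ k, Q j k • pderiv j (pderiv k g)
  map_add' A B := by simp [add_smul, Finset.sum_add_distrib]
  map_smul' c A := by simp [smul_smul, Finset.smul_sum]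

theorem MvPolynomial.contractMatrix_apply (g : MvPolynomial σ K) (Q : Matrix σ σ K) :
    contractMatrix g Q = ∑ j, ∑ k, Q j k • pderiv j (pderiv k g) := rfl

theorem MvPolynomial.contractMatrix_transpose (g : MvPolynomial σ K) (Q : Matrix σ σ K) :
    contractMatrix g Qᵀ = contractMatrix g Q := by
  rw [contractMatrix_apply, contractMatrix_apply, Finset.sum_comm]
  simp only [transpose_apply, pderiv_pderiv_comm]

theorem MvPolynomial.contractMatrix_symMul (g : MvPolynomial σ K) (x y : σ → K) :
    contractMatrix g (symMul x y) = (2 : K) • contractMatrix g (vecMulVec x y) := by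
  rw [symMul, map_add, ← transpose_vecMulVec, contractMatrix_transpose, two_smul]

theorem MvPolynomial.IsHomogeneous.finrank_range_contractMatrix_le {g : MvPolynomial σ K}
    (hg : g.IsHomogeneous 3) :
    finrank K (LinearMap.range (contractMatrix g)) ≤ Fintype.card σ := by
  have hle : LinearMap.range (contractMatrix g) ≤ Submodule.span K (Set.range X) := by
    rw [← homogeneousSubmodule_one_eq_span_X]
    rintro _ ⟨Q, rfl⟩
    exact Submodule.sum_mem _ fun j _ => Submodule.sum_mem _ fun k _ =>
      Submodule.smul_mem _ _ (hg.pderiv.pderiv)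
  have : FiniteDimensional K (Submodule.span K (Set.range (X : σ → MvPolynomial σ K))) :=
    FiniteDimensional.span_of_finite K (Set.finite_range _)
  exact (Submodule.finrank_mono hle).trans (finrank_range_le_card _)

theorem contra_contra_eq_contractMatrix (x y : Fin 3 → K) (g : MvPolynomial (Fin 3) K) :
    contra x (contra y g) = contractMatrix g (vecMulVec x y) := by
  simp only [contra, contractMatrix_apply, map_sum, Derivation.map_smul, Finset.smul_sum,
    smul_smul, vecMulVec_apply]

noncomputable def Matrix.fromSymCoords : (Fin 6 → K) →ₗ[K] Matrix (Fin 3) (Fin 3) K where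
  toFun c := !![c 0, c 3, c 4; c 3, c 1, c 5; c 4, c 5, c 2]
  map_add' _ _ := by ext i j; fin_cases i <;> fin_cases j <;> rfl
  map_smul' _ _ := by ext i j; fin_cases i <;> fin_cases j <;> rfl

theorem Matrix.fromSymCoords_transpose (c : Fin 6 → K) :
    (fromSymCoords c)ᵀ = fromSymCoords c := by
  ext i j; fin_cases i <;> fin_cases j <;> rfl

theorem Matrix.fromSymCoords_injective : Function.Injective (fromSymCoords (K := K)) := by
  intro c d h
  ext k
  fin_cases k
  exacts [congrFun₂ h 0 0, congrFun₂ h 1 1, congrFun₂ h 2 2, congrFun₂ h 0 1, congrFun₂ h 0 2,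
    congrFun₂ h 1 2]

noncomputable def MvPolynomial.apolarConics (g : MvPolynomial (Fin 3) K) :
    Submodule K (Matrix (Fin 3) (Fin 3) K) :=
  (LinearMap.ker (contractMatrix g ∘ₗ fromSymCoords)).map fromSymCoords

theorem MvPolynomial.transpose_eq_of_mem_apolarConics {g : MvPolynomial (Fin 3) K}
    {Q : Matrix (Fin 3) (Fin 3) K} (hQ : Q ∈ apolarConics g) : Qᵀ = Q := by
  obtain ⟨c, -, rfl⟩ := hQ
  exact fromSymCoords_transpose c

theorem MvPolynomial.contractMatrix_eq_zero_of_mem_apolarConics {g : MvPolynomial (Fin 3) K}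
    {Q : Matrix (Fin 3) (Fin 3) K} (hQ : Q ∈ apolarConics g) : contractMatrix g Q = 0 := by
  obtain ⟨c, hc, rfl⟩ := hQ
  exact hc

theorem MvPolynomial.IsHomogeneous.three_le_finrank_apolarConics {g : MvPolynomial (Fin 3) K}
    (hg : g.IsHomogeneous 3) : 3 ≤ finrank K (apolarConics g) := by
  rw [apolarConics,
    (Submodule.equivMapOfInjective _ fromSymCoords_injective _).symm.finrank_eq]
  have h1 := LinearMap.finrank_range_add_finrank_ker (contractMatrix g ∘ₗ fromSymCoords)
  have h2 := Submodule.finrank_mono (LinearMap.range_comp_le_range fromSymCoords (contractMatrix g))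
  have h3 := hg.finrank_range_contractMatrix_le
  simp only [finrank_fin_fun, Fintype.card_fin] at h1 h3
  omega

theorem LinearIndependent.span_singleton_ne {V : Type*} [AddCommGroup V] [Module K V] {x y : V}
    (h : LinearIndependent K ![x, y]) : K ∙ x ≠ K ∙ y := by
  intro hxy
  obtain ⟨a, ha⟩ := Submodule.mem_span_singleton.mp (hxy ▸ Submodule.mem_span_singleton_self y)
  exact (LinearIndependent.pair_iff' (by simpa using h.ne_zero 0)).mp h a ha

end

theorem exists_simply_degenerate_apolar_conic_general
    {K : Type*} [Field K] [IsAlgClosed K] [CharZero K]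
    (g : MvPolynomial (Fin 3) K) (hg : g.IsHomogeneous 3) :
    ∃ x y : Fin 3 → K, x ≠ 0 ∧ y ≠ 0 ∧
      Submodule.span K {x} ≠ Submodule.span K {y} ∧
      contra x (contra y g) = 0 := by
  obtain ⟨x, y, hxy, hmem⟩ := (apolarConics g).exists_linearIndependent_symMul_mem
    (fun _ => transpose_eq_of_mem_apolarConics) hg.three_le_finrank_apolarConics
  refine ⟨x, y, by simpa using hxy.ne_zero 0, by simpa using hxy.ne_zero 1,
    hxy.span_singleton_ne, ?_⟩
  have hQ := contractMatrix_eq_zero_of_mem_apolarConics hmem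
  rw [contractMatrix_symMul, smul_eq_zero] at hQ
  rw [contra_contra_eq_contractMatrix]
  exact hQ.resolve_left two_ne_zero

/-- Every nonzero ternary cubic `g` admits an apolar conic which is simply degenerate:
there exist `x, y ∈ S^1`, nonzero and spanning distinct lines, with `(xy) ⌟ g = 0`. -/
theorem exists_simply_degenerate_apolar_conic
    {K : Type*} [Field K] [IsAlgClosed K] [CharZero K]
    (g : MvPolynomial (Fin 3) K) (hg : g.IsHomogeneous 3) (hg0 : g ≠ 0) :
    ∃ x y : Fin 3 → K, x ≠ 0 ∧ y ≠ 0 ∧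
      Submodule.span K {x} ≠ Submodule.span K {y} ∧
      contra x (contra y g) = 0 :=
  exists_simply_degenerate_apolar_conic_general g hg
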